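/- arXiv:math/0701258 — 5 statements merged into one kernel-verified Lean document; each statement's English description precedes it below -/
import Mathlib

section
/- In a finite regular linear space with v points, b lines, k points per line, and r lines per point, we have b = v(v-1)/(k(k-1)) and b ≥ v (Fisher's inequality), assuming 2 ≤ k < v and the space is non-trivial (every line has at least 3 points and there are at least two lines). -/
open Pointwise

structure LinearSpace (P : Type*) [DecidableEq P] where
  lines : Finset (Finset P)
  exists_unique_line : ∀ a b : P, a ≠ b → ∃! L, L ∈ lines ∧ a ∈ L ∧ b ∈ L

namespace LinearSpace

variable {P : Type*} [DecidableEq P]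

/-- Non-trivial: every line has at least 3 points and there are at least two lines. -/
def Nontrivial (S : LinearSpace P) : Prop :=
  (∀ L ∈ S.lines, 3 ≤ L.card) ∧ 2 ≤ S.lines.card

/-- Regular with line size `k` and `r` lines per point. -/
def Regular [Fintype P] (S : LinearSpace P) (k r : ℕ) : Prop :=
  (∀ L ∈ S.lines, L.card = k) ∧ ∀ a : P, (S.lines.filter fun L => a ∈ L).card = r

/-- `G` acts as automorphisms of `S`, transitively on the set of lines. -/
def LineTrans (G : Type*) [Group G] [MulAction G P] (S : LinearSpace P) : Prop :=
  (∀ (g : G), ∀ L ∈ S.lines, g • L ∈ S.lines) ∧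
    ∀ L₁ ∈ S.lines, ∀ L₂ ∈ S.lines, ∃ g : G, g • L₁ = L₂

end LinearSpace

theorem stmt0 {P : Type*} [Fintype P] [DecidableEq P] (S : LinearSpace P)
    (v b k r : ℕ) (hv : v = Fintype.card P) (hb : b = S.lines.card)
    (hnt : S.Nontrivial) (hreg : S.Regular k r) (hk2 : 2 ≤ k) (hkv : k < v) :
    b * (k * (k - 1)) = v * (v - 1) ∧ v ≤ b := by
  classical
  obtain ⟨hnt3, hnt2⟩ := hnt
  obtain ⟨hk, hr⟩ := hreg
  -- Lemma A : r * (k - 1) = v - 1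
  have hA : r * (k - 1) = v - 1 := by
    have hvpos : 0 < v := lt_of_le_of_lt (Nat.zero_le k) hkv
    obtain ⟨a⟩ : Nonempty P := by
      rw [hv] at hvpos; exact Fintype.card_pos_iff.mp hvpos
    have hunion : (S.lines.filter fun L => a ∈ L).biUnion (fun L => L.erase a)
        = Finset.univ.erase a := by
      ext x
      simp only [Finset.mem_biUnion, Finset.mem_filter, Finset.mem_erase,
        Finset.mem_univ, and_true]
      constructor
      · rintro ⟨L, ⟨-, -⟩, hx, -⟩; exact hx
      · intro hx
        obtain ⟨L, ⟨hL, haL, hxL⟩, -⟩ := S.exists_unique_line a x (Ne.symm hx)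
        exact ⟨L, ⟨hL, haL⟩, hx, hxL⟩
    have hdisj : ∀ L₁ ∈ (S.lines.filter fun L => a ∈ L),
        ∀ L₂ ∈ (S.lines.filter fun L => a ∈ L), L₁ ≠ L₂ →
        Disjoint (L₁.erase a) (L₂.erase a) := by
      intro L₁ h₁ L₂ h₂ hne
      rw [Finset.mem_filter] at h₁ h₂
      rw [Finset.disjoint_left]
      intro x hx₁ hx₂
      rw [Finset.mem_erase] at hx₁ hx₂
      obtain ⟨M, -, hu⟩ := S.exists_unique_line a x (Ne.symm hx₁.1)
      exact hne ((hu L₁ ⟨h₁.1, h₁.2, hx₁.2⟩).trans (hu L₂ ⟨h₂.1, h₂.2, hx₂.2⟩).symm)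
    have hcard := Finset.card_biUnion hdisj
    rw [hunion] at hcard
    have hsum : ∑ L ∈ (S.lines.filter fun L => a ∈ L), (L.erase a).card
        = r * (k - 1) := by
      rw [Finset.sum_congr rfl (fun L hL => ?_), Finset.sum_const, hr a, smul_eq_mul]
      rw [Finset.mem_filter] at hL
      rw [Finset.card_erase_of_mem hL.2, hk L hL.1]
    rw [hsum] at hcard
    rw [← hcard, Finset.card_erase_of_mem (Finset.mem_univ a), Finset.card_univ, ← hv]
  -- v * r = b * k
  have hvr : v * r = b * k := by
    have h1 : ∑ a : P, (S.lines.filter fun L => a ∈ L).card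
        = ∑ L ∈ S.lines, L.card := by
      simp only [Finset.card_filter]
      rw [Finset.sum_comm]
      refine Finset.sum_congr rfl fun L hL => ?_
      rw [← Finset.card_filter]
      congr 1
      ext x; simp
    rw [Finset.sum_congr rfl (fun a _ => hr a),
      Finset.sum_congr rfl (fun L hL => hk L hL),
      Finset.sum_const, Finset.sum_const, smul_eq_mul, smul_eq_mul,
      Finset.card_univ] at h1
    rw [hv, hb]; exact h1
  have heq : b * (k * (k - 1)) = v * (v - 1) := by
    rw [← Nat.mul_assoc, ← hvr, Nat.mul_assoc, hA]
  refine ⟨heq, ?_⟩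
  -- k ≤ r : Fisher
  have hkr : k ≤ r := by
    obtain ⟨L, hL⟩ : S.lines.Nonempty := Finset.card_pos.mp (by omega)
    have hLss : L ⊂ Finset.univ := by
      refine Finset.ssubset_univ_iff.mpr fun h => ?_
      have := hk L hL
      rw [h, Finset.card_univ, ← hv] at this
      omega
    obtain ⟨p, -, hp⟩ := Finset.exists_of_ssubset hLss
    have h1 : ∀ x ∈ L, ∃ M, M ∈ S.lines ∧ p ∈ M ∧ x ∈ M := by
      intro x hx
      exact (S.exists_unique_line p x (fun h => hp (h ▸ hx))).exists
    set f : P → Finset P := fun x => if h : x ∈ L then (h1 x h).choose else ∅ with hf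
    have hfspec : ∀ x ∈ L, f x ∈ S.lines ∧ p ∈ f x ∧ x ∈ f x := by
      intro x hx
      simp only [hf, dif_pos hx]
      exact (h1 x hx).choose_spec
    have hmaps : ∀ x ∈ L, f x ∈ S.lines.filter fun M => p ∈ M :=
      fun x hx => Finset.mem_filter.mpr ⟨(hfspec x hx).1, (hfspec x hx).2.1⟩
    have := Finset.card_le_card_of_injOn f hmaps
      (by
        intro x hx y hy hxy
        by_contra hne
        obtain ⟨M, -, hu⟩ := S.exists_unique_line x y hne
        have hfx := hfspec x hx
        have hfy := hfspec y hy
        have hfxL : f x = L := by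
          have e1 := hu (f x) ⟨hfx.1, hfx.2.2, hxy ▸ hfy.2.2⟩
          have e2 := hu L ⟨hL, hx, hy⟩
          rw [e1, e2]
        exact hp (hfxL ▸ hfx.2.1))
    rw [hk L hL, hr p] at this
    exact this
  have hvk : v * k ≤ b * k := by
    calc v * k ≤ v * r := Nat.mul_le_mul_left v hkr
    _ = b * k := hvr
  exact Nat.le_of_mul_le_mul_right hvk (by omega)
end

section
/- Let G act line-transitively on a non-trivial finite regular linear space S which is not a projective plane (so b > v), and let t be a prime dividing both v - 1 and b (a significant prime). If S is a Sylow t-subgroup of a point stabilizer G_α, then S is a Sylow t-subgroup of G and G_α contains the normalizer N_G(S). -/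
open Pointwise

/-! A line-transitive group is point-transitive: the orbit of `α` meets every line in the same
number `c` of points, and comparing the incidence counts `|O| r = b c`, `|O| = r (c - 1) + 1` for
the orbit with `v r = b k`, `v = r (k - 1) + 1` forces `c = k`, since `r ≥ 2`. Hence
`|G : G_α| = v` is prime to `t`, so a Sylow `t`-subgroup `U` of `G_α` is Sylow in `G`. If `g`
normalises `U` but moves `α`, then `U` also fixes `g • α`, hence the line through `α` and `g • α`;
but a line stabiliser has index `b`, which `t` divides, contradicting that `U` is Sylow. -/

namespace LinearSpace

variable {P : Type*} [DecidableEq P] (S : LinearSpace P)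

theorem eq_of_mem_of_mem {L M : Finset P} (hL : L ∈ S.lines) (hM : M ∈ S.lines) {a b : P}
    (hab : a ≠ b) (haL : a ∈ L) (hbL : b ∈ L) (haM : a ∈ M) (hbM : b ∈ M) : L = M := by
  obtain ⟨N, -, hN⟩ := S.exists_unique_line a b hab
  exact (hN L ⟨hL, haL, hbL⟩).trans (hN M ⟨hM, haM, hbM⟩).symm

theorem le_stabilizer_line {G : Type*} [Group G] [MulAction G P]
    (hG : ∀ g : G, ∀ L ∈ S.lines, g • L ∈ S.lines) {H : Subgroup G} {a b : P} (hab : a ≠ b)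
    (ha : H ≤ MulAction.stabilizer G a) (hb : H ≤ MulAction.stabilizer G b)
    {L : Finset P} (hL : L ∈ S.lines) (haL : a ∈ L) (hbL : b ∈ L) :
    H ≤ MulAction.stabilizer G L := fun g hg => by
  have hga : g • a = a := ha hg
  have hgb : g • b = b := hb hg
  refine S.eq_of_mem_of_mem (hG g L hL) hL hab ?_ ?_ haL hbL
  · simpa only [hga] using Finset.smul_mem_smul_finset (a := g) haL
  · simpa only [hgb] using Finset.smul_mem_smul_finset (a := g) hbL

theorem LineTrans.index_stabilizer_line {G : Type*} [Group G] [MulAction G P]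
    {S : LinearSpace P} (hlt : S.LineTrans G) {L : Finset P} (hL : L ∈ S.lines) :
    (MulAction.stabilizer G L).index = S.lines.card := by
  have horbit : MulAction.orbit G L = S.lines := by
    ext M
    constructor
    · rintro ⟨g, rfl⟩
      exact hlt.1 g L hL
    · exact fun hM => hlt.2 L hL M hM
  rw [MulAction.index_stabilizer, horbit, Set.ncard_coe_finset]

theorem card_mul_eq_card_lines_mul {r c : ℕ}
    (hr : ∀ a : P, (S.lines.filter fun L => a ∈ L).card = r)
    (O : Finset P) (hc : ∀ L ∈ S.lines, (L ∩ O).card = c) :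
    O.card * r = S.lines.card * c :=
  Finset.card_mul_eq_card_mul (· ∈ ·) (fun a _ => hr a)
    fun L hL => by rw [Finset.bipartiteBelow, Finset.filter_mem_eq_inter, Finset.inter_comm, hc L hL]

/-- The points of `O` other than `α` are counted along the `r` lines through `α`. -/
theorem card_add_eq_mul_add_one {r c : ℕ} {α : P}
    (hr : (S.lines.filter fun L => α ∈ L).card = r)
    {O : Finset P} (hαO : α ∈ O) (hc : ∀ L ∈ S.lines, (L ∩ O).card = c) :
    O.card + r = r * c + 1 := by
  set Lα := S.lines.filter fun L => α ∈ L
  have hcover : O.erase α = Lα.biUnion fun L => (L ∩ O).erase α := by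
    ext p
    simp only [Lα, Finset.mem_erase, Finset.mem_biUnion, Finset.mem_filter, Finset.mem_inter]
    constructor
    · rintro ⟨hpα, hpO⟩
      obtain ⟨L, ⟨hL, hαL, hpL⟩, -⟩ := S.exists_unique_line α p (Ne.symm hpα)
      exact ⟨L, ⟨hL, hαL⟩, hpα, hpL, hpO⟩
    · rintro ⟨L, -, hpα, -, hpO⟩
      exact ⟨hpα, hpO⟩
  have hdisj : (Lα : Set (Finset P)).PairwiseDisjoint fun L => (L ∩ O).erase α := by
    intro L₁ h₁ L₂ h₂ hne
    simp only [Lα, Finset.coe_filter, Set.mem_ofPred_eq] at h₁ h₂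
    refine Finset.disjoint_left.mpr fun p hp₁ hp₂ => ?_
    simp only [Finset.mem_erase, Finset.mem_inter] at hp₁ hp₂
    exact hne (S.eq_of_mem_of_mem h₁.1 h₂.1 (Ne.symm hp₁.1) h₁.2 hp₁.2.1 h₂.2 hp₂.2.1)
  have hfibre : ∀ L ∈ Lα, ((L ∩ O).erase α).card + 1 = c := fun L hL => by
    rw [Finset.mem_filter] at hL
    rw [Finset.card_erase_add_one (Finset.mem_inter.mpr ⟨hL.2, hαO⟩), hc L hL.1]
  calc O.card + r = (O.erase α).card + Lα.card + 1 := by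
        rw [hr, ← Finset.card_erase_add_one hαO]; ring
    _ = ∑ L ∈ Lα, (((L ∩ O).erase α).card + 1) + 1 := by
        rw [hcover, Finset.card_biUnion hdisj, Finset.sum_add_distrib, Finset.card_eq_sum_ones]
    _ = r * c + 1 := by rw [Finset.sum_congr rfl hfibre, Finset.sum_const, smul_eq_mul, hr]

variable {S} [Fintype P]

theorem Regular.card_mul_eq {k r : ℕ} (hreg : S.Regular k r) :
    Fintype.card P * r = S.lines.card * k := by
  rw [← Finset.card_univ]
  exact S.card_mul_eq_card_lines_mul hreg.2 _ fun L hL => by rw [Finset.inter_univ, hreg.1 L hL]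

theorem Regular.card_add_eq {k r : ℕ} (hreg : S.Regular k r) (α : P) :
    Fintype.card P + r = r * k + 1 := by
  rw [← Finset.card_univ]
  exact S.card_add_eq_mul_add_one (hreg.2 α) (Finset.mem_univ α)
    fun L hL => by rw [Finset.inter_univ, hreg.1 L hL]

theorem Regular.two_le {k r : ℕ} (hnt : S.Nontrivial) (hreg : S.Regular k r) (α : P) : 2 ≤ r := by
  obtain ⟨L, hL⟩ := Finset.card_pos.mp (lt_of_lt_of_le two_pos hnt.2)
  have hk : 3 ≤ k := hreg.1 L hL ▸ hnt.1 L hL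
  have hkv : k ≤ Fintype.card P := hreg.1 L hL ▸ Finset.card_le_univ L
  have h₁ := hreg.card_mul_eq
  have h₂ := hreg.card_add_eq α
  have hb := hnt.2
  by_contra! hr
  interval_cases r <;> nlinarith

theorem LineTrans.orbit_eq_univ {G : Type*} [Group G] [MulAction G P] {k r : ℕ}
    (hnt : S.Nontrivial) (hreg : S.Regular k r) (hlt : S.LineTrans G) (α : P) :
    MulAction.orbit G α = Set.univ := by
  classical
  set O := (MulAction.orbit G α).toFinset
  have hO : ∀ g : G, g • O = O := fun g => by
    rw [← Set.toFinset_smul_set, MulAction.smul_orbit]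
  obtain ⟨L₀, hL₀⟩ := Finset.card_pos.mp (lt_of_lt_of_le two_pos hnt.2)
  have hc : ∀ L ∈ S.lines, (L ∩ O).card = (L₀ ∩ O).card := fun L hL => by
    obtain ⟨g, rfl⟩ := hlt.2 L₀ hL₀ L hL
    rw [← hO g, ← Finset.smul_finset_inter, Finset.card_smul_finset, hO]
  have hαO : α ∈ O := Set.mem_toFinset.mpr (MulAction.mem_orbit_self α)
  have h₁ := S.card_mul_eq_card_lines_mul hreg.2 O hc
  have h₂ := S.card_add_eq_mul_add_one (hreg.2 α) hαO hc
  have h₃ := hreg.card_mul_eq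
  have h₄ := hreg.card_add_eq α
  have hr := hreg.two_le hnt α
  set c := (L₀ ∩ O).card
  have hkO : k * O.card = c * Fintype.card P := by
    apply Nat.eq_of_mul_eq_mul_right (by omega : 0 < r)
    calc k * O.card * r = c * (S.lines.card * k) := by rw [mul_assoc, h₁]; ring
      _ = c * Fintype.card P * r := by rw [← h₃]; ring
  have hkc : (k - c : ℤ) * (r - 1) = 0 := by
    zify at h₂ h₄ hkO
    linear_combination k * h₂ - c * h₄ - hkO
  obtain rfl : k = c := by
    rcases mul_eq_zero.mp hkc with h | h <;> omega
  exact Set.toFinset_eq_univ.mp (Finset.eq_univ_of_card O (by omega))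

end LinearSpace

theorem Sylow.exists_coe_eq_map_subtype {G : Type*} [Group G] [Finite G] {p : ℕ} [Fact p.Prime]
    {H : Subgroup G} (hH : ¬ p ∣ H.index) (T : Sylow p H) :
    ∃ U : Sylow p G, (U : Subgroup G) = (T : Subgroup H).map H.subtype :=
  have hT : ¬ p ∣ ((T : Subgroup H).map H.subtype).index := by
    rw [Subgroup.index_map_subtype]
    exact (Fact.out : p.Prime).not_dvd_mul T.not_dvd_index hH
  ⟨(T.2.map H.subtype).toSylow hT, IsPGroup.toSylow_coe _ _⟩

theorem Subgroup.le_stabilizer_smul_of_mem_normalizer {G X : Type*} [Group G] [MulAction G X]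
    {H : Subgroup G} {a : X} (hH : H ≤ MulAction.stabilizer G a) {g : G}
    (hg : g ∈ Subgroup.normalizer (H : Set G)) :
    H ≤ MulAction.stabilizer G (g • a) := fun x hx => by
  have hfix : (g⁻¹ * x * g) • a = a := hH ((Subgroup.mem_normalizer_iff''.mp hg x).mp hx)
  show x • g • a = g • a
  calc x • g • a = g • (g⁻¹ * x * g) • a := by simp only [smul_smul]; congr 1; group
    _ = g • a := by rw [hfix]

theorem stmt8_general {P G : Type*} [Fintype P] [DecidableEq P] [Group G] [MulAction G P]
    [Finite G]
    (S : LinearSpace P) (v b k r : ℕ) (hv : v = Fintype.card P) (hb : b = S.lines.card)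
    (hnt : S.Nontrivial) (hreg : S.Regular k r) (hlt : S.LineTrans G)
    (t : ℕ) [Fact t.Prime] (htv : t ∣ v - 1) (htb : t ∣ b)
    (α : P) (T : Sylow t ↥(MulAction.stabilizer G α)) :
    (∃ U : Sylow t G,
        (U : Subgroup G) = (T : Subgroup ↥(MulAction.stabilizer G α)).map
          (MulAction.stabilizer G α).subtype) ∧
      Subgroup.normalizer (((T : Subgroup ↥(MulAction.stabilizer G α)).map
          (MulAction.stabilizer G α).subtype : Subgroup G) : Set G) ≤ MulAction.stabilizer G α := by
  have hindex : (MulAction.stabilizer G α).index = v := by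
    rw [MulAction.index_stabilizer, hlt.orbit_eq_univ hnt hreg, Set.ncard_univ,
      Nat.card_eq_fintype_card, hv]
  have htv' : ¬ t ∣ v := fun h => (Fact.out : t.Prime).not_dvd_one <| by
    have : 0 < v := hv ▸ Fintype.card_pos_iff.mpr ⟨α⟩
    simpa [Nat.sub_sub_self this] using Nat.dvd_sub h htv
  obtain ⟨U, hU⟩ := Sylow.exists_coe_eq_map_subtype (hindex ▸ htv') T
  refine ⟨⟨U, hU⟩, fun g hg => ?_⟩
  by_contra hgα
  rw [← hU] at hg
  have hUα : (U : Subgroup G) ≤ MulAction.stabilizer G α := hU ▸ Subgroup.map_subtype_le _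
  obtain ⟨L, ⟨hL, hαL, hgαL⟩, -⟩ := S.exists_unique_line α (g • α) (Ne.symm hgα)
  have hUL := S.le_stabilizer_line hlt.1 (Ne.symm hgα) hUα
    (Subgroup.le_stabilizer_smul_of_mem_normalizer hUα hg) hL hαL hgαL
  refine U.not_dvd_index (htb.trans ?_)
  rw [hb, ← hlt.index_stabilizer_line hL]
  exact Subgroup.index_dvd_of_le hUL

theorem stmt8 {P G : Type*} [Fintype P] [DecidableEq P] [Group G] [MulAction G P]
    [Finite G]
    (S : LinearSpace P) (v b k r : ℕ) (hv : v = Fintype.card P) (hb : b = S.lines.card)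
    (hnt : S.Nontrivial) (hreg : S.Regular k r) (hlt : S.LineTrans G)
    (hnpp : b ≠ v)
    (t : ℕ) [Fact t.Prime] (htv : t ∣ v - 1) (htb : t ∣ b)
    (α : P) (T : Sylow t ↥(MulAction.stabilizer G α)) :
    (∃ U : Sylow t G,
        (U : Subgroup G) = (T : Subgroup ↥(MulAction.stabilizer G α)).map
          (MulAction.stabilizer G α).subtype) ∧
      Subgroup.normalizer (((T : Subgroup ↥(MulAction.stabilizer G α)).map
          (MulAction.stabilizer G α).subtype : Subgroup G) : Set G) ≤ MulAction.stabilizer G α :=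
  stmt8_general S v b k r hv hb hnt hreg hlt t htv htb α T
end

section
/- Let G be a group acting line-transitively on a non-trivial finite regular linear space S, and let B be a normal subgroup of G with |G : B| prime. If B is not line-transitive on S, then either S is a projective plane or the triple (G, B, Π) is exceptional, i.e. the only common orbital of B and G on the point set Π is the diagonal. -/
open Pointwise

theorem stmt11 {P G : Type*} [Fintype P] [DecidableEq P] [Group G] [MulAction G P]
    (S : LinearSpace P) (hnt : S.Nontrivial) (hlt : S.LineTrans G)
    (B : Subgroup G) (hB : B.Normal) (hBprime : B.index.Prime)
    (hBnotlt : ¬ (∀ L₁ ∈ S.lines, ∀ L₂ ∈ S.lines, ∃ x ∈ B, x • L₁ = L₂)) :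
    S.lines.card = Fintype.card P ∨
      (∀ x y : P, MulAction.orbit B ((x, y) : P × P) = MulAction.orbit G ((x, y) : P × P)
        → x = y) := by
  right
  intro x y horb
  by_contra hxy
  exact hBnotlt <| by
    obtain ⟨L, ⟨hL, hxL, hyL⟩, -⟩ := S.exists_unique_line x y hxy
    have key : ∀ L₂ ∈ S.lines, ∃ c ∈ B, c • L = L₂ := by
      intro L₂ hL₂
      obtain ⟨g, hg⟩ := hlt.2 L hL L₂ hL₂
      have hmem : (g • (x, y) : P × P) ∈ MulAction.orbit B ((x, y) : P × P) := by
        rw [horb]; exact MulAction.mem_orbit _ g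
      obtain ⟨c, hc⟩ := hmem
      refine ⟨(c : G), c.2, ?_⟩
      have hcx : (c : G) • x = g • x := congrArg Prod.fst hc
      have hcy : (c : G) • y = g • y := congrArg Prod.snd hc
      have hne : g • x ≠ g • y := fun h => hxy (smul_left_cancel g h)
      obtain ⟨M, -, hMuniq⟩ := S.exists_unique_line (g • x) (g • y) hne
      have h1 : (c : G) • L = M := by
        refine hMuniq _ ⟨hlt.1 _ L hL, ?_, ?_⟩
        · rw [← hcx]; exact Finset.smul_mem_smul_finset hxL
        · rw [← hcy]; exact Finset.smul_mem_smul_finset hyL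
      have h2 : g • L = M := by
        refine hMuniq _ ⟨hlt.1 _ L hL, ?_, ?_⟩
        · exact Finset.smul_mem_smul_finset hxL
        · exact Finset.smul_mem_smul_finset hyL
      rw [h1, ← h2, hg]
    intro L₁ hL₁ L₂ hL₂
    obtain ⟨c₁, hc₁B, hc₁⟩ := key L₁ hL₁
    obtain ⟨c₂, hc₂B, hc₂⟩ := key L₂ hL₂
    refine ⟨c₂ * c₁⁻¹, mul_mem hc₂B (inv_mem hc₁B), ?_⟩
    rw [← hc₁, smul_smul, mul_assoc, inv_mul_cancel, mul_one, hc₂]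
end

section
/- Let G be a finite group acting line-transitively on a non-trivial finite regular linear space S. If some involution g ∈ G fixes no point of S, then G acts flag-transitively on S. -/
open Pointwise

/-- Two lines sharing two distinct points are equal. -/
lemma line_eq_line {P : Type*} [DecidableEq P] (S : LinearSpace P) {a b : P} (hab : a ≠ b)
    {L M : Finset P} (hL : L ∈ S.lines) (ha : a ∈ L) (hb : b ∈ L)
    (hM : M ∈ S.lines) (ha' : a ∈ M) (hb' : b ∈ M) : L = M := by
  obtain ⟨N, -, hu⟩ := S.exists_unique_line a b hab
  rw [hu L ⟨hL, ha, hb⟩, hu M ⟨hM, ha', hb'⟩]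

/-- The key arithmetic for point-transitivity. -/
lemma arith_pt (k r v f c m : ℕ) (e1 : r * (k-1) = v - 1) (e2 : f * k = v) (e3 : f * c = m)
    (e4 : r * (c-1) = m - 1) (ck : 3 ≤ k) (cr : 2 ≤ r) (cc : 1 ≤ c) (cm : 1 ≤ m) (cv : 1 ≤ v) :
    m = v := by
  zify [ck, cc, cm, cv, show 1 ≤ k by omega] at e1 e4
  have e2' : ((f:ℤ) * k) = v := by exact_mod_cast e2
  have e3' : ((f:ℤ) * c) = m := by exact_mod_cast e3
  have hA : (k:ℤ) * m = v * c := by linear_combination (c:ℤ) * e2' - (k:ℤ) * e3'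
  have key : ((c:ℤ) - k) * ((r:ℤ) - 1) = 0 := by
    linear_combination hA - (c:ℤ) * e1 + (k:ℤ) * e4
  have cr' : (2:ℤ) ≤ r := by exact_mod_cast cr
  have hck : (c:ℤ) = k := by
    rcases mul_eq_zero.mp key with h | h
    · linarith
    · linarith
  have hk0 : (0:ℤ) < k := by exact_mod_cast (by omega : 0 < k)
  have hmv : (m:ℤ) = v := by
    rw [hck] at hA
    have := mul_right_cancel₀ (ne_of_gt hk0) (by linarith [hA] : (m:ℤ) * k = v * k)
    linarith
  exact_mod_cast hmv

theorem stmt12 {P G : Type*} [Fintype P] [DecidableEq P] [Group G] [Finite G]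
    [MulAction G P]
    (S : LinearSpace P) (hnt : S.Nontrivial) (hlt : S.LineTrans G)
    (g : G) (hginv : g ≠ 1 ∧ g * g = 1) (hnofix : ∀ a : P, g • a ≠ a) :
    ∀ α₁ : P, ∀ L₁ ∈ S.lines, α₁ ∈ L₁ →
      ∀ α₂ : P, ∀ L₂ ∈ S.lines, α₂ ∈ L₂ →
        ∃ x : G, x • α₁ = α₂ ∧ x • L₁ = L₂ := by
  classical
  intro α₁ L₁ hL₁ hα₁
  -- notation
  set v := Fintype.card P with hv
  set b := S.lines.card with hb
  set k := L₁.card with hkdef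
  -- all lines have k points
  have hkall : ∀ L ∈ S.lines, L.card = k := by
    intro L hL
    obtain ⟨x, hx⟩ := hlt.2 L₁ hL₁ L hL
    rw [← hx, Finset.card_smul_finset]
  have hk3 : 3 ≤ k := hnt.1 L₁ hL₁
  have hv1 : 1 ≤ v := Fintype.card_pos_iff.mpr ⟨α₁⟩
  -- lines through a point partition the remaining points
  have hthrough : ∀ a : P, (S.lines.filter (fun L => a ∈ L)).card * (k-1) = v - 1 := by
    intro a
    have hbU : (S.lines.filter (fun L => a ∈ L)).biUnion (fun L => L.erase a)
        = Finset.univ.erase a := by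
      apply Finset.Subset.antisymm
      · intro β hβ
        simp only [Finset.mem_biUnion, Finset.mem_filter] at hβ
        obtain ⟨L, ⟨-, -⟩, hβL⟩ := hβ
        exact Finset.mem_erase.mpr ⟨(Finset.mem_erase.mp hβL).1, Finset.mem_univ β⟩
      · intro β hβ
        have hβa : β ≠ a := (Finset.mem_erase.mp hβ).1
        obtain ⟨L, ⟨hL, haL, hβL⟩, -⟩ := S.exists_unique_line a β hβa.symm
        simp only [Finset.mem_biUnion, Finset.mem_filter]
        exact ⟨L, ⟨hL, haL⟩, Finset.mem_erase.mpr ⟨hβa, hβL⟩⟩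
    have hdisj : ∀ L ∈ S.lines.filter (fun L => a ∈ L), ∀ M ∈ S.lines.filter (fun L => a ∈ L),
        L ≠ M → Disjoint (L.erase a) (M.erase a) := by
      intro L hL M hM hLM
      rw [Finset.disjoint_left]
      intro β hβL hβM
      obtain ⟨hβa, hβL'⟩ := Finset.mem_erase.mp hβL
      obtain ⟨-, hβM'⟩ := Finset.mem_erase.mp hβM
      simp only [Finset.mem_filter] at hL hM
      exact hLM (line_eq_line S (Ne.symm hβa) hL.1 hL.2 hβL' hM.1 hM.2 hβM')
    have hcb := Finset.card_biUnion hdisj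
    rw [hbU, Finset.card_erase_of_mem (Finset.mem_univ a), Finset.card_univ] at hcb
    have hsum : (∑ L ∈ S.lines.filter (fun L => a ∈ L), (L.erase a).card)
        = (S.lines.filter (fun L => a ∈ L)).card * (k-1) := by
      rw [Finset.sum_congr rfl (fun L hL => ?_), Finset.sum_const, smul_eq_mul]
      simp only [Finset.mem_filter] at hL
      rw [Finset.card_erase_of_mem hL.2, hkall L hL.1]
    rw [← hsum]
    exact hcb.symm
  set r := (S.lines.filter (fun L => α₁ ∈ L)).card with hrdef
  have hrall : ∀ a : P, (S.lines.filter (fun L => a ∈ L)).card = r := by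
    intro a
    have h1 := hthrough a
    have h2 := hthrough α₁
    rw [← hrdef] at h2
    exact Nat.eq_of_mul_eq_mul_right (by omega) (h1.trans h2.symm)
  -- r ≥ 2
  have hr2 : 2 ≤ r := by
    obtain ⟨L', hL', hL'ne⟩ := Finset.exists_mem_ne (show 1 < S.lines.card by have := hnt.2; omega) L₁
    have hL₁mem : L₁ ∈ S.lines.filter (fun L => α₁ ∈ L) := Finset.mem_filter.mpr ⟨hL₁, hα₁⟩
    by_cases hα₁L' : α₁ ∈ L'
    · have : L' ∈ S.lines.filter (fun L => α₁ ∈ L) := Finset.mem_filter.mpr ⟨hL', hα₁L'⟩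
      exact Finset.one_lt_card.mpr ⟨L', this, L₁, hL₁mem, hL'ne⟩
    · -- pick γ ∈ L' \ L₁
      have : ¬ L' ⊆ L₁ := by
        intro hsub
        obtain ⟨γ₁, hγ₁, γ₂, hγ₂, hγne⟩ :=
          Finset.one_lt_card.mp (show 1 < L'.card by have := hnt.1 L' hL'; omega)
        exact hL'ne (line_eq_line S hγne hL' hγ₁ hγ₂ hL₁ (hsub hγ₁) (hsub hγ₂))
      obtain ⟨γ, hγL', hγL₁⟩ := Finset.not_subset.mp this
      have hγα₁ : α₁ ≠ γ := fun h => hγL₁ (h ▸ hα₁)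
      obtain ⟨M, ⟨hM, hα₁M, hγM⟩, -⟩ := S.exists_unique_line α₁ γ hγα₁
      have hMne : M ≠ L₁ := fun h => hγL₁ (h ▸ hγM)
      have : M ∈ S.lines.filter (fun L => α₁ ∈ L) := Finset.mem_filter.mpr ⟨hM, hα₁M⟩
      exact Finset.one_lt_card.mpr ⟨M, this, L₁, hL₁mem, hMne⟩
  -- fixed lines of g form a spread : f * k = v
  have hgfix : ∀ a : P, ∃ N ∈ S.lines, g • N = N ∧ a ∈ N := by
    intro a
    obtain ⟨N, ⟨hN, haN, hgaN⟩, -⟩ := S.exists_unique_line a (g • a) (Ne.symm (hnofix a))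
    refine ⟨N, hN, ?_, haN⟩
    have hga : g • (g • a) = a := by rw [smul_smul, hginv.2, one_smul]
    have h1 : a ∈ g • N := by
      have := Finset.smul_mem_smul_finset (a := g) hgaN
      rwa [hga] at this
    have h2 : g • a ∈ g • N := Finset.smul_mem_smul_finset haN
    exact line_eq_line S (Ne.symm (hnofix a)) (hlt.1 g N hN) h1 h2 hN haN hgaN
  set Fx := S.lines.filter (fun L => g • L = L) with hFxdef
  have hFxdisj : ∀ L ∈ Fx, ∀ M ∈ Fx, L ≠ M → Disjoint L M := by
    intro L hL M hM hLM
    rw [Finset.disjoint_left]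
    intro a haL haM
    simp only [hFxdef, Finset.mem_filter] at hL hM
    have hgaL : g • a ∈ L := by
      have := Finset.smul_mem_smul_finset (a := g) haL; rwa [hL.2] at this
    have hgaM : g • a ∈ M := by
      have := Finset.smul_mem_smul_finset (a := g) haM; rwa [hM.2] at this
    exact hLM (line_eq_line S (Ne.symm (hnofix a)) hL.1 haL hgaL hM.1 haM hgaM)
  have hFxcard : Fx.card * k = v := by
    have hbU : Fx.biUnion id = Finset.univ := by
      apply Finset.eq_univ_of_forall
      intro a
      obtain ⟨N, hN, hgN, haN⟩ := hgfix a
      exact Finset.mem_biUnion.mpr ⟨N, Finset.mem_filter.mpr ⟨hN, hgN⟩, haN⟩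
    have hcb := Finset.card_biUnion (t := fun L => L) hFxdisj
    rw [show Fx.biUnion (fun L => L) = Fx.biUnion id from rfl, hbU, Finset.card_univ] at hcb
    have hsum : (∑ L ∈ Fx, L.card) = Fx.card * k := by
      rw [Finset.sum_congr rfl (fun L hL => hkall L (Finset.mem_filter.mp hL).1),
        Finset.sum_const, smul_eq_mul]
    rw [hsum] at hcb
    exact hcb.symm
  -- the orbit of α₁
  set O := Finset.univ.filter (fun a => a ∈ MulAction.orbit G α₁) with hOdef
  have hOmem : ∀ a : P, a ∈ O ↔ ∃ x : G, x • α₁ = a := by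
    intro a
    simp only [hOdef, Finset.mem_filter, Finset.mem_univ, true_and, MulAction.mem_orbit_iff]
  have hα₁O : α₁ ∈ O := (hOmem α₁).mpr ⟨1, one_smul _ _⟩
  have hOsmul : ∀ x : G, x • O = O := by
    intro x
    apply Finset.eq_of_subset_of_card_le
    · intro a ha
      obtain ⟨c, hc, rfl⟩ := Finset.mem_smul_finset.mp ha
      obtain ⟨y, hy⟩ := (hOmem c).mp hc
      exact (hOmem _).mpr ⟨x * y, by rw [mul_smul, hy]⟩
    · rw [Finset.card_smul_finset]
  -- every line meets O in the same number of points
  set c := (L₁ ∩ O).card with hcdef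
  have hcall : ∀ L ∈ S.lines, (L ∩ O).card = c := by
    intro L hL
    obtain ⟨x, hx⟩ := hlt.2 L₁ hL₁ L hL
    rw [← hx, ← hOsmul x, ← Finset.smul_finset_inter, Finset.card_smul_finset]
  have hc1 : 1 ≤ c := Finset.card_pos.mpr ⟨α₁, Finset.mem_inter.mpr ⟨hα₁, hα₁O⟩⟩
  set m := O.card with hmdef
  have hm1 : 1 ≤ m := Finset.card_pos.mpr ⟨α₁, hα₁O⟩
  -- count O against the spread : Fx.card * c = m
  have hOspread : Fx.card * c = m := by
    have hbU : Fx.biUnion (fun L => L ∩ O) = O := by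
      apply Finset.Subset.antisymm
      · intro a ha
        obtain ⟨L, -, haL⟩ := Finset.mem_biUnion.mp ha
        exact (Finset.mem_inter.mp haL).2
      · intro a ha
        obtain ⟨N, hN, hgN, haN⟩ := hgfix a
        exact Finset.mem_biUnion.mpr ⟨N, Finset.mem_filter.mpr ⟨hN, hgN⟩,
          Finset.mem_inter.mpr ⟨haN, ha⟩⟩
    have hdisj : ∀ L ∈ Fx, ∀ M ∈ Fx, L ≠ M → Disjoint (L ∩ O) (M ∩ O) := by
      intro L hL M hM hLM
      exact Finset.disjoint_of_subset_left Finset.inter_subset_left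
        (Finset.disjoint_of_subset_right Finset.inter_subset_left (hFxdisj L hL M hM hLM))
    have hcb := Finset.card_biUnion hdisj
    rw [hbU] at hcb
    have hsum : (∑ L ∈ Fx, (L ∩ O).card) = Fx.card * c := by
      rw [Finset.sum_congr rfl (fun L hL => hcall L (Finset.mem_filter.mp hL).1),
        Finset.sum_const, smul_eq_mul]
    rw [hsum] at hcb
    exact hcb.symm
  -- count O against the lines through α₁ : r * (c - 1) = m - 1
  have hOthrough : r * (c - 1) = m - 1 := by
    have hbU : (S.lines.filter (fun L => α₁ ∈ L)).biUnion (fun L => (L ∩ O).erase α₁)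
        = O.erase α₁ := by
      apply Finset.Subset.antisymm
      · intro β hβ
        simp only [Finset.mem_biUnion] at hβ
        obtain ⟨L, -, hβL⟩ := hβ
        obtain ⟨h1, h2⟩ := Finset.mem_erase.mp hβL
        exact Finset.mem_erase.mpr ⟨h1, (Finset.mem_inter.mp h2).2⟩
      · intro β hβ
        obtain ⟨hβα, hβO⟩ := Finset.mem_erase.mp hβ
        obtain ⟨L, ⟨hL, hα₁L, hβL⟩, -⟩ := S.exists_unique_line α₁ β hβα.symm
        exact Finset.mem_biUnion.mpr ⟨L, Finset.mem_filter.mpr ⟨hL, hα₁L⟩,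
          Finset.mem_erase.mpr ⟨hβα, Finset.mem_inter.mpr ⟨hβL, hβO⟩⟩⟩
    have hdisj : ∀ L ∈ S.lines.filter (fun L => α₁ ∈ L),
        ∀ M ∈ S.lines.filter (fun L => α₁ ∈ L), L ≠ M →
        Disjoint ((L ∩ O).erase α₁) ((M ∩ O).erase α₁) := by
      intro L hL M hM hLM
      rw [Finset.disjoint_left]
      intro β hβL hβM
      obtain ⟨hβα, hβL'⟩ := Finset.mem_erase.mp hβL
      obtain ⟨-, hβM'⟩ := Finset.mem_erase.mp hβM
      simp only [Finset.mem_filter] at hL hM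
      exact hLM (line_eq_line S (Ne.symm hβα) hL.1 hL.2 (Finset.mem_inter.mp hβL').1
        hM.1 hM.2 (Finset.mem_inter.mp hβM').1)
    have hcb := Finset.card_biUnion hdisj
    rw [hbU, Finset.card_erase_of_mem hα₁O] at hcb
    have hsum : (∑ L ∈ S.lines.filter (fun L => α₁ ∈ L), ((L ∩ O).erase α₁).card)
        = r * (c - 1) := by
      rw [Finset.sum_congr rfl (fun L hL => ?_), Finset.sum_const, smul_eq_mul, hrdef]
      simp only [Finset.mem_filter] at hL
      rw [Finset.card_erase_of_mem (Finset.mem_inter.mpr ⟨hL.2, hα₁O⟩), hcall L hL.1]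
    rw [hsum] at hcb
    exact hcb.symm
  -- point-transitivity
  have hOv : m = v := arith_pt k r v Fx.card c m (hthrough α₁) hFxcard hOspread hOthrough
    hk3 hr2 hc1 hm1 hv1
  have hpt : ∀ a : P, ∃ x : G, x • α₁ = a := by
    intro a
    have : O = Finset.univ := Finset.eq_univ_of_card O (by rw [← hmdef, hOv, hv])
    exact (hOmem a).mp (this ▸ Finset.mem_univ a)
  -- flag-orbit double counting
  set q : P → Finset P → Prop := fun β L' => ∃ x : G, x • α₁ = β ∧ x • L₁ = L' with hqdef
  have hdc : (∑ L' ∈ S.lines, (Finset.univ.filter (fun β => q β L')).card)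
      = ∑ β : P, (S.lines.filter (fun L' => q β L')).card := by
    simp only [Finset.card_filter]
    exact Finset.sum_comm
  set s := (Finset.univ.filter (fun β => q β L₁)).card with hsdef
  set t := (S.lines.filter (fun L' => q α₁ L')).card with htdef
  -- fibers over lines all have size s
  have hfib1 : ∀ L' ∈ S.lines, (Finset.univ.filter (fun β => q β L')).card = s := by
    intro L' hL'
    obtain ⟨x₀, hx₀⟩ := hlt.2 L₁ hL₁ L' hL'
    have himg : Finset.univ.filter (fun β => q β L')
        = (Finset.univ.filter (fun β => q β L₁)).image (fun β => x₀ • β) := by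
      ext β
      simp only [Finset.mem_filter, Finset.mem_univ, true_and, Finset.mem_image, hqdef]
      constructor
      · rintro ⟨x, hxα, hxL⟩
        refine ⟨x₀⁻¹ • β, ⟨x₀⁻¹ * x, ?_, ?_⟩, smul_inv_smul x₀ β⟩
        · rw [mul_smul, hxα]
        · rw [mul_smul, hxL, ← hx₀, inv_smul_smul]
      · rintro ⟨γ, ⟨⟨x, hxα, hxL⟩, rfl⟩⟩
        exact ⟨x₀ * x, by rw [mul_smul, hxα], by rw [mul_smul, hxL, hx₀]⟩
    rw [himg, Finset.card_image_of_injective _ (MulAction.injective x₀)]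
  -- fibers over points all have size t
  have hfib2 : ∀ β : P, (S.lines.filter (fun L' => q β L')).card = t := by
    intro β
    obtain ⟨x₀, hx₀⟩ := hpt β
    have himg : S.lines.filter (fun L' => q β L')
        = (S.lines.filter (fun L' => q α₁ L')).image (fun M => x₀ • M) := by
      ext M
      simp only [Finset.mem_filter, Finset.mem_image, hqdef]
      constructor
      · rintro ⟨hM, x, hxα, hxL⟩
        refine ⟨x₀⁻¹ • M, ⟨hlt.1 x₀⁻¹ M hM, ⟨x₀⁻¹ * x, ?_, ?_⟩⟩, smul_inv_smul x₀ M⟩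
        · rw [mul_smul, hxα, ← hx₀, inv_smul_smul]
        · rw [mul_smul, hxL]
      · rintro ⟨N, ⟨hN, ⟨x, hxα, hxL⟩⟩, rfl⟩
        exact ⟨hlt.1 x₀ N hN, x₀ * x, by rw [mul_smul, hxα, hx₀], by rw [mul_smul, hxL]⟩
    rw [himg, Finset.card_image_of_injective _ (fun A B h => by
      simpa using congrArg (fun T : Finset P => x₀⁻¹ • T) h)]
  have hbsvt : b * s = v * t := by
    have h1 : (∑ L' ∈ S.lines, (Finset.univ.filter (fun β => q β L')).card) = b * s := by
      rw [Finset.sum_congr rfl hfib1, Finset.sum_const, smul_eq_mul]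
    have h2 : (∑ β : P, (S.lines.filter (fun L' => q β L')).card) = v * t := by
      rw [Finset.sum_congr rfl (fun β _ => hfib2 β), Finset.sum_const, smul_eq_mul,
        Finset.card_univ]
    rw [← h1, hdc, h2]
  -- total flag count : b * k = v * r
  have hbkvr : b * k = v * r := by
    have h1 : (∑ L' ∈ S.lines, (Finset.univ.filter (fun β => β ∈ L')).card)
        = ∑ β : P, (S.lines.filter (fun L' => β ∈ L')).card := by
      simp only [Finset.card_filter]
      exact Finset.sum_comm
    have h2 : (∑ L' ∈ S.lines, (Finset.univ.filter (fun β => β ∈ L')).card) = b * k := by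
      rw [Finset.sum_congr rfl (fun L hL => ?_), Finset.sum_const, smul_eq_mul]
      rw [show Finset.univ.filter (fun β => β ∈ L) = L by ext β; simp, hkall L hL]
    have h3 : (∑ β : P, (S.lines.filter (fun L' => β ∈ L')).card) = v * r := by
      rw [Finset.sum_congr rfl (fun β _ => hrall β), Finset.sum_const, smul_eq_mul,
        Finset.card_univ]
    rw [← h2, h1, h3]
  -- gcd(k, r) = 1
  have hco : Nat.Coprime k r := by
    have hkv : k ∣ v := Dvd.intro_left Fx.card hFxcard
    have h1 : Nat.gcd k r ∣ v := dvd_trans (Nat.gcd_dvd_left k r) hkv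
    have h2 : Nat.gcd k r ∣ r * (k - 1) := Dvd.dvd.mul_right (Nat.gcd_dvd_right k r) _
    have h3 : Nat.gcd k r ∣ v - r * (k - 1) := Nat.dvd_sub h1 h2
    have h4 : v - r * (k - 1) = 1 := by
      have := hthrough α₁
      rw [← hrdef] at this
      omega
    rw [h4] at h3
    exact Nat.dvd_one.mp h3
  -- k ∣ s
  have hb1 : 0 < b := by have := hnt.2; omega
  have hsk : s = k := by
    have hsr : s * r = k * t := by
      have : b * (s * r) = b * (k * t) := by
        calc b * (s * r) = (b * s) * r := by ring
        _ = (v * t) * r := by rw [hbsvt]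
        _ = (v * r) * t := by ring
        _ = (b * k) * t := by rw [hbkvr]
        _ = b * (k * t) := by ring
      exact Nat.eq_of_mul_eq_mul_left (by omega) this
    have hks : k ∣ s := (Nat.Coprime.dvd_of_dvd_mul_right hco) ⟨t, hsr⟩
    have hs1 : 1 ≤ s := by
      apply Finset.card_pos.mpr
      exact ⟨α₁, Finset.mem_filter.mpr ⟨Finset.mem_univ α₁, ⟨1, one_smul _ _, one_smul _ _⟩⟩⟩
    have hssub : Finset.univ.filter (fun β => q β L₁) ⊆ L₁ := by
      intro β hβ
      obtain ⟨x, hxα, hxL⟩ := (Finset.mem_filter.mp hβ).2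
      rw [← hxα, ← hxL]
      exact Finset.smul_mem_smul_finset hα₁
    have hsle : s ≤ k := by
      rw [hsdef, hkdef]
      exact Finset.card_le_card hssub
    exact Nat.le_antisymm hsle (Nat.le_of_dvd (by omega) hks)
  -- the stabilizer of L₁ is transitive on L₁
  have hcore : ∀ β ∈ L₁, ∃ x : G, x • α₁ = β ∧ x • L₁ = L₁ := by
    have hssub : Finset.univ.filter (fun β => q β L₁) ⊆ L₁ := by
      intro β hβ
      obtain ⟨x, hxα, hxL⟩ := (Finset.mem_filter.mp hβ).2
      rw [← hxα, ← hxL]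
      exact Finset.smul_mem_smul_finset hα₁
    have heq : Finset.univ.filter (fun β => q β L₁) = L₁ :=
      Finset.eq_of_subset_of_card_le hssub (by rw [← hsdef, hsk])
    intro β hβ
    have hmem : β ∈ Finset.univ.filter (fun β => q β L₁) := by rw [heq]; exact hβ
    exact (Finset.mem_filter.mp hmem).2
  -- conclude
  intro α₂ L₂ hL₂ hα₂
  obtain ⟨y, hy⟩ := hlt.2 L₁ hL₁ L₂ hL₂
  have hβ : y⁻¹ • α₂ ∈ L₁ := by
    have : α₂ ∈ y • L₁ := hy ▸ hα₂
    obtain ⟨γ, hγ, hγ'⟩ := Finset.mem_smul_finset.mp this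
    rw [← hγ', inv_smul_smul]; exact hγ
  obtain ⟨z, hzα, hzL⟩ := hcore (y⁻¹ • α₂) hβ
  refine ⟨y * z, ?_, ?_⟩
  · rw [mul_smul, hzα, smul_inv_smul]
  · rw [mul_smul, hzL, hy]
end

section
/- Let G act line-transitively and point-imprimitively on a non-trivial finite regular linear space with line size k, and let G_α be a point stabilizer. Then for any subgroup M with G_α < M < G, both |G : M| < k(k-1)/2 and |M : G_α| < k(k-1)/2. -/
open Pointwise

/-!
The `G`-translates of the orbit `M • α` form a system of `c = |G : M|` blocks of size
`d = |M : G_α|`, so the space has `n = d c` points. Line-transitivity (which forces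
point-transitivity) makes the number `x` of ordered pairs of distinct points of a line lying in a
common block the same for every line; double counting these pairs, and flags, gives
`x (n - 1) = (d - 1) k (k - 1)`. Since `x` and `k (k - 1)` are even and `0 < x < k (k - 1)`, this
forces `2 c < k (k - 1)`, and, rewritten as `d (k (k - 1) - x c) = k (k - 1) - x`, also
`2 d < k (k - 1)`.
-/

open Finset

lemma card_filter_offDiag_univ_eq_sum {P : Type*} [Fintype P] [DecidableEq P]
    (R : P → P → Prop) [DecidableRel R] :
    #{pq ∈ (univ : Finset P).offDiag | R pq.1 pq.2} = ∑ p, #{q | p ≠ q ∧ R p q} := by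
  rw [card_eq_sum_card_fiberwise (f := Prod.fst) (t := univ) fun _ _ => mem_univ _]
  refine sum_congr rfl fun p _ => card_nbij' Prod.snd (fun q => (p, q)) ?_ ?_ ?_ ?_ <;>
    intro x <;> simp +contextual [eq_comm]

lemma even_card_filter_offDiag {P : Type*} [Fintype P] [DecidableEq P] {R : P → P → Prop}
    [DecidableRel R] (hR : ∀ ⦃p q⦄, R p q → R q p) (L : Finset P) :
    Even #{pq ∈ L.offDiag | R pq.1 pq.2} := by
  classical
  let Γ : SimpleGraph P := SimpleGraph.fromRel fun p q => p ∈ L ∧ q ∈ L ∧ R p q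
  have : {pq ∈ L.offDiag | R pq.1 pq.2} = univ.filter fun (p, q) => Γ.Adj p q := by
    ext ⟨p, q⟩
    simp only [mem_filter, mem_offDiag, mem_univ, true_and, Γ, SimpleGraph.fromRel_adj]
    exact ⟨fun ⟨⟨hp, hq, hpq⟩, h⟩ => ⟨hpq, Or.inl ⟨hp, hq, h⟩⟩,
      fun ⟨hpq, h⟩ => h.elim (fun ⟨hp, hq, h⟩ => ⟨⟨hp, hq, hpq⟩, h⟩)
        fun ⟨hq, hp, h⟩ => ⟨⟨hp, hq, hpq⟩, hR h⟩⟩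
  rw [this, ← Γ.two_mul_card_edgeFinset]
  exact even_two_mul _

lemma two_mul_lt_of_mul_sub_one_eq {x K d c : ℕ} (hx : Even x) (hK : Even K) (hK0 : 0 < K)
    (hd : 2 ≤ d) (hc : 2 ≤ c) (h : x * (d * c - 1) = (d - 1) * K) : 2 * c < K ∧ 2 * d < K := by
  obtain ⟨a, rfl⟩ := hx
  obtain ⟨b, rfl⟩ := hK
  have hdc : 2 * d ≤ d * c := by nlinarith
  zify [(by omega : 1 ≤ d * c), (by omega : 1 ≤ d)] at h hdc ⊢
  have ha : 1 ≤ (a : ℤ) := by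
    by_contra! ha0
    nlinarith
  -- `x < K`, hence `x + 2 ≤ K` by parity
  have hab : (a : ℤ) + 1 ≤ b := by
    by_contra! hba
    nlinarith
  -- `d (K - x c) = K - x`, where `K - x c` is even, hence at least `2`
  have hkey : (d : ℤ) * (b - a * c) = b - a := by linarith
  have hbac : 1 ≤ (b : ℤ) - a * c := by
    by_contra! h0
    nlinarith
  constructor <;> nlinarith

namespace LinearSpace

section Basic

variable {P : Type*} [DecidableEq P] (S : LinearSpace P)

lemma eq_of_mem_of_mem_s13 {L₁ L₂ : Finset P} (hL₁ : L₁ ∈ S.lines) (hL₂ : L₂ ∈ S.lines) {p q : P}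
    (hpq : p ≠ q) (hp₁ : p ∈ L₁) (hq₁ : q ∈ L₁) (hp₂ : p ∈ L₂) (hq₂ : q ∈ L₂) : L₁ = L₂ :=
  (S.exists_unique_line p q hpq).unique ⟨hL₁, hp₁, hq₁⟩ ⟨hL₂, hp₂, hq₂⟩

lemma sum_card_inter_of_notMem {p : P} {T : Finset P} (hp : p ∉ T) :
    ∑ L ∈ S.lines with p ∈ L, #(L ∩ T) = #T := by
  rw [← card_biUnion]
  · congr 1
    ext q
    simp only [mem_biUnion, mem_filter, mem_inter]
    refine ⟨fun ⟨_, _, hq⟩ => hq.2, fun hq => ?_⟩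
    obtain ⟨L, ⟨hL, hpL, hqL⟩, -⟩ := S.exists_unique_line p q fun h => hp (h ▸ hq)
    exact ⟨L, ⟨hL, hpL⟩, hqL, hq⟩
  · intro L₁ hL₁ L₂ hL₂ hne
    rw [coe_filter] at hL₁ hL₂
    refine disjoint_left.mpr fun q hq₁ hq₂ => hne ?_
    rw [mem_inter] at hq₁ hq₂
    exact S.eq_of_mem_of_mem_s13 hL₁.1 hL₂.1 (p := p) (q := q) (fun h => hp (h ▸ hq₁.2)) hL₁.2 hq₁.1
      hL₂.2 hq₂.1

lemma card_eq_of_card_inter_eq {p : P} {T : Finset P} {m : ℕ} (hp : p ∉ T)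
    (hT : ∀ L ∈ S.lines, p ∈ L → #(L ∩ T) = m) :
    #T = #{L ∈ S.lines | p ∈ L} * m := by
  rw [← S.sum_card_inter_of_notMem hp, sum_const_nat fun L hL => hT L (mem_filter.1 hL).1
    (mem_filter.1 hL).2]

lemma card_sub_one_eq_of_card_inter_eq {p : P} {T : Finset P} {m : ℕ} (hp : p ∈ T)
    (hT : ∀ L ∈ S.lines, p ∈ L → #(L ∩ T) = m) :
    #T - 1 = #{L ∈ S.lines | p ∈ L} * (m - 1) := by
  rw [← card_erase_of_mem hp]
  refine S.card_eq_of_card_inter_eq (notMem_erase p T) fun L hL hpL => ?_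
  rw [inter_erase, card_erase_of_mem (mem_inter.2 ⟨hpL, hp⟩), hT L hL hpL]

lemma sum_card_filter_offDiag [Fintype P] (R : P × P → Prop) [DecidablePred R] :
    ∑ L ∈ S.lines, #{pq ∈ L.offDiag | R pq} = #{pq ∈ univ.offDiag | R pq} := by
  rw [← card_biUnion]
  · congr 1
    ext ⟨p, q⟩
    simp only [mem_biUnion, mem_filter, mem_offDiag, mem_univ, true_and]
    refine ⟨fun ⟨_, _, ⟨_, _, hpq⟩, hR⟩ => ⟨hpq, hR⟩, fun ⟨hpq, hR⟩ => ?_⟩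
    obtain ⟨L, ⟨hL, hpL, hqL⟩, -⟩ := S.exists_unique_line p q hpq
    exact ⟨L, hL, ⟨hpL, hqL, hpq⟩, hR⟩
  · intro L₁ hL₁ L₂ hL₂ hne
    refine disjoint_left.mpr fun pq h₁ h₂ => hne ?_
    simp only [mem_filter, mem_offDiag] at h₁ h₂
    exact S.eq_of_mem_of_mem_s13 hL₁ hL₂ h₁.1.2.2 h₁.1.1 h₁.1.2.1 h₂.1.1 h₂.1.2.1

variable [Fintype P] {S} {k r : ℕ}

lemma card_lines_mul_eq (hreg : S.Regular k r) : #S.lines * k = Fintype.card P * r := by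
  rw [← sum_card hreg.2, sum_const_nat hreg.1]

lemma card_eq_of_regular [Nonempty P] (hreg : S.Regular k r) :
    Fintype.card P = r * (k - 1) + 1 := by
  obtain ⟨p⟩ := ‹Nonempty P›
  have h := S.card_sub_one_eq_of_card_inter_eq (mem_univ p) (m := k) fun L hL _ => by
    rw [inter_univ, hreg.1 L hL]
  rw [card_univ, hreg.2 p] at h
  have := Fintype.card_pos (α := P)
  omega

lemma Nontrivial.three_le_pointsPerLine (hnt : S.Nontrivial) (hreg : S.Regular k r) : 3 ≤ k := by
  obtain ⟨L, hL⟩ := card_pos.1 (by have := hnt.2; omega : 0 < #S.lines)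
  exact hreg.1 L hL ▸ hnt.1 L hL

lemma Nontrivial.two_le_linesPerPoint (hnt : S.Nontrivial) (hreg : S.Regular k r) : 2 ≤ r := by
  have hk := hnt.three_le_pointsPerLine hreg
  obtain ⟨L, hL⟩ := card_pos.1 (by have := hnt.2; omega : 0 < #S.lines)
  obtain ⟨p, -⟩ := card_pos.1 (hreg.1 L hL ▸ (by omega) : 0 < #L)
  have : Nonempty P := ⟨p⟩
  have hflags := card_lines_mul_eq hreg
  rw [card_eq_of_regular hreg] at hflags
  have hb := hnt.2
  obtain ⟨k, rfl⟩ : ∃ k', k = k' + 1 := ⟨k - 1, by omega⟩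
  simp only [Nat.add_sub_cancel] at hflags
  by_contra! hr
  interval_cases r <;> nlinarith

end Basic

section LineTransitive

variable {P G : Type*} [DecidableEq P] [Group G] [MulAction G P] {S : LinearSpace P}

lemma LineTrans.card_inter_eq (hlt : S.LineTrans G) {T : Finset P} (hT : ∀ g : G, g • T = T)
    {L₁ L₂ : Finset P} (hL₁ : L₁ ∈ S.lines) (hL₂ : L₂ ∈ S.lines) : #(L₁ ∩ T) = #(L₂ ∩ T) := by
  obtain ⟨g, rfl⟩ := hlt.2 L₁ hL₁ L₂ hL₂
  rw [← card_smul_finset g (L₁ ∩ T), smul_finset_inter, hT]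

lemma LineTrans.card_filter_offDiag_eq (hlt : S.LineTrans G) {R : P → P → Prop}
    [DecidableRel R] (hR : ∀ (g : G) p q, R (g • p) (g • q) ↔ R p q) {L₁ L₂ : Finset P}
    (hL₁ : L₁ ∈ S.lines) (hL₂ : L₂ ∈ S.lines) :
    #{pq ∈ L₁.offDiag | R pq.1 pq.2} = #{pq ∈ L₂.offDiag | R pq.1 pq.2} := by
  obtain ⟨g, rfl⟩ := hlt.2 L₁ hL₁ L₂ hL₂
  rw [← card_smul_finset g]
  congr 1
  ext ⟨p, q⟩
  simp only [← inv_smul_mem_iff, mem_filter, mem_offDiag, Prod.smul_mk, ne_eq,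
    smul_left_cancel_iff, hR]

variable [Fintype P] {k r : ℕ}

theorem LineTrans.isPretransitive (hlt : S.LineTrans G) (hnt : S.Nontrivial)
    (hreg : S.Regular k r) : MulAction.IsPretransitive G P := by
  classical
  refine ⟨fun a q => ?_⟩
  by_contra hq
  set O := (MulAction.orbit G a).toFinset
  have hO : ∀ g : G, g • O = O := fun g => coe_injective (by simp [O, MulAction.smul_orbit])
  have hr := hnt.two_le_linesPerPoint hreg
  obtain ⟨L, hL⟩ : {L ∈ S.lines | a ∈ L}.Nonempty := by
    rw [← card_pos, hreg.2 a]
    omega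
  have haO : a ∈ O := by simp [O, MulAction.mem_orbit_self]
  have hm : 0 < #(L ∩ O) := card_pos.2 ⟨a, mem_inter.2 ⟨(mem_filter.1 hL).2, haO⟩⟩
  have hmeet : ∀ L' ∈ S.lines, #(L' ∩ O) = #(L ∩ O) := fun L' hL' =>
    hlt.card_inter_eq hO hL' (mem_filter.1 hL).1
  -- counting `O` from a point inside it and from a point outside it forces `r = 1`
  have hin := S.card_sub_one_eq_of_card_inter_eq haO fun L' hL' _ => hmeet L' hL'
  have hout := S.card_eq_of_card_inter_eq (p := q) (by simpa [O, MulAction.mem_orbit_iff] using hq)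
    fun L' hL' _ => hmeet L' hL'
  rw [hreg.2] at hin hout
  obtain ⟨m, hm'⟩ : ∃ m, #(L ∩ O) = m + 1 := ⟨_, (Nat.succ_pred_eq_of_pos hm).symm⟩
  rw [hm', Nat.add_sub_cancel] at hin
  rw [hm', mul_add_one] at hout
  omega

/-- Each line carries the same number `x` of `R`-pairs; double counting `R`-pairs (`e` per point)
and flags gives `x r = e k`, while `n - 1 = r (k - 1)`. -/
theorem LineTrans.card_filter_offDiag_mul [Nonempty P] {e : ℕ} (hlt : S.LineTrans G)
    (hreg : S.Regular k r) {R : P → P → Prop} [DecidableRel R]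
    (hR : ∀ (g : G) p q, R (g • p) (g • q) ↔ R p q) (he : ∀ p, #{q | p ≠ q ∧ R p q} = e)
    {L : Finset P} (hL : L ∈ S.lines) :
    #{pq ∈ L.offDiag | R pq.1 pq.2} * (Fintype.card P - 1) = e * (k * (k - 1)) := by
  set x := #{pq ∈ L.offDiag | R pq.1 pq.2}
  have hpairs : #S.lines * x = Fintype.card P * e := by
    rw [← sum_const_nat fun L' hL' => hlt.card_filter_offDiag_eq hR hL' hL,
      S.sum_card_filter_offDiag fun pq => R pq.1 pq.2, card_filter_offDiag_univ_eq_sum,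
      sum_const_nat fun p _ => he p, card_univ]
  have hxr : x * r = e * k := by
    refine Nat.eq_of_mul_eq_mul_left (Fintype.card_pos (α := P)) ?_
    calc Fintype.card P * (x * r) = #S.lines * k * x := by rw [card_lines_mul_eq hreg]; ring
      _ = Fintype.card P * (e * k) := by rw [mul_right_comm, hpairs]; ring
  rw [card_eq_of_regular hreg, Nat.add_sub_cancel, ← mul_assoc, hxr, mul_assoc]

end LineTransitive

end LinearSpace

namespace MulAction

variable (G : Type*) {P : Type*} [Group G] [MulAction G P]

def SameBlock (B : Set P) (p q : P) : Prop := ∃ g : G, p ∈ g • B ∧ q ∈ g • B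

variable {G} {B : Set P} {p q : P}

lemma SameBlock.symm (h : SameBlock G B p q) : SameBlock G B q p :=
  let ⟨g, hp, hq⟩ := h
  ⟨g, hq, hp⟩

lemma sameBlock_smul_iff (g : G) : SameBlock G B (g • p) (g • q) ↔ SameBlock G B p q := by
  simp only [SameBlock, ← Set.mem_inv_smul_set_iff, smul_smul]
  exact ⟨fun ⟨h, hp, hq⟩ => ⟨g⁻¹ * h, hp, hq⟩,
    fun ⟨h, hp, hq⟩ => ⟨g * h, by simpa using hp, by simpa using hq⟩⟩

lemma IsBlock.sameBlock_iff (hB : IsBlock G B) {g : G} (hp : p ∈ g • B) :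
    SameBlock G B p q ↔ q ∈ g • B :=
  ⟨fun ⟨_, hp', hq⟩ => hB.smul_eq_smul_of_nonempty ⟨p, hp', hp⟩ ▸ hq, fun hq => ⟨g, hp, hq⟩⟩

lemma IsBlock.card_sameBlock [Fintype P] [DecidableEq P] [IsPretransitive G P]
    [DecidableRel (SameBlock G B)] (hB : IsBlock G B) {α : P} (hα : α ∈ B) (p : P) :
    #{q | p ≠ q ∧ SameBlock G B p q} = B.ncard - 1 := by
  obtain ⟨g, rfl⟩ := exists_smul_eq G α p
  have hgα : g • α ∈ g • B := Set.smul_mem_smul_set hα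
  have hblock : (({q | SameBlock G B (g • α) q} : Finset P) : Set P) = g • B := by
    ext q
    simp [hB.sameBlock_iff hgα]
  rw [← Set.ncard_smul_set g, ← hblock, Set.ncard_coe_finset, ← card_erase_of_mem (a := g • α)]
  · congr 1
    ext q
    simp [eq_comm]
  · exact mem_filter.2 ⟨mem_univ _, g, hgα, hgα⟩

end MulAction

open MulAction

theorem stmt13 {P G : Type*} [Fintype P] [DecidableEq P] [Group G] [MulAction G P]
    (S : LinearSpace P) (k r : ℕ)
    (hnt : S.Nontrivial) (hreg : S.Regular k r) (hlt : S.LineTrans G)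
    (α : P) (M : Subgroup G)
    (h1 : MulAction.stabilizer G α < M) (h2 : M < ⊤) :
    2 * M.index < k * (k - 1) ∧
      2 * (MulAction.stabilizer G α).relIndex M < k * (k - 1) := by
  classical
  have : Nonempty P := ⟨α⟩
  have := hlt.isPretransitive hnt hreg
  have hcard : Fintype.card P = (stabilizer G α).relIndex M * M.index := by
    rw [Subgroup.relIndex_mul_index h1.le, index_stabilizer_of_transitive,
      Nat.card_eq_fintype_card]
  have hpos : 0 < (stabilizer G α).relIndex M * M.index := hcard ▸ Fintype.card_pos
  have hd : 2 ≤ (stabilizer G α).relIndex M := by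
    have := Nat.pos_of_mul_pos_right hpos
    have := mt Subgroup.relIndex_eq_one.1 h1.not_ge
    omega
  have hc : 2 ≤ M.index := by
    have := Nat.pos_of_mul_pos_left hpos
    have := mt Subgroup.index_eq_one.1 h2.ne
    omega
  have hk := hnt.three_le_pointsPerLine hreg
  have hB : IsBlock G (orbit M α) := IsBlock.of_orbit h1.le
  have hαB : α ∈ orbit M α := mem_orbit_self α
  obtain ⟨L, hL⟩ := card_pos.1 (by have := hnt.2; omega : 0 < #S.lines)
  have hx := hlt.card_filter_offDiag_mul hreg (R := SameBlock G (orbit M α))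
    (fun g _ _ => sameBlock_smul_iff g) (hB.card_sameBlock hαB) hL
  rw [hB.ncard_block_eq_relIndex hαB, stabilizer_orbit_eq h1.le, hcard] at hx
  exact two_mul_lt_of_mul_sub_one_eq
    (even_card_filter_offDiag (R := SameBlock G (orbit M α)) (fun _ _ => SameBlock.symm) L)
    (Nat.even_mul_pred_self k) (Nat.mul_pos (by omega) (by omega)) hd hc hx
end
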